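/- Upper bound in the limit (claim (5.6) in the proof of Lemma 5.1): Let ξ_m → ξ in ℝ, p_m → p in ℝ^n with p ≠ 0, and symmetric matrices M_m → M. Then limsup_{m→∞} H_m⁻(ξ_m, p_m, M_m) ≤ −F(ξ, p, M). -/

import Mathlib

open scoped RealInnerProductSpace
open Filter Topology

noncomputable section

namespace TugOfWar

/-- The quadratic form `vᵀ Σ M Σ v`, where `Σ = diag (σ 1, …, σ n)`. -/
def sigQF {n : ℕ} (σ : Fin n → ℝ) (M : Matrix (Fin n) (Fin n) ℝ)
    (v : EuclideanSpace ℝ (Fin n)) : ℝ :=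
  ∑ i, ∑ j, (σ i * v i) * M i j * (σ j * v j)

/-- `trace (Σ² M)`. -/
def trSig2 {n : ℕ} (σ : Fin n → ℝ) (M : Matrix (Fin n) (Fin n) ℝ) : ℝ :=
  ∑ i, σ i ^ 2 * M i i

/-- The integrand `Φ(θ⁺,θ⁻,d⁺,d⁻,p,M)`. -/
def Phi {n : ℕ} (σ : Fin n → ℝ) (μ : EuclideanSpace ℝ (Fin n))
    (θp θm : EuclideanSpace ℝ (Fin n)) (dp dm : ℝ)
    (p : EuclideanSpace ℝ (Fin n)) (M : Matrix (Fin n) (Fin n) ℝ) : ℝ :=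
  -(1 / 2) * sigQF σ M (θp - θm) - (1 / 2) * trSig2 σ M
    - (dp + dm) * ⟪θp + θm, p⟫ - ⟪μ, p⟫

/-- The control set `ℋ_m = S^{n-1} × [0, m]`. -/
def Hset (n : ℕ) (m : ℕ) : Set (EuclideanSpace ℝ (Fin n) × ℝ) :=
  {a | ‖a.1‖ = 1 ∧ a.2 ∈ Set.Icc (0 : ℝ) (m : ℝ)}

/-- `H_m⁺(ξ,p,M) = sup_{(θ⁻,d⁻)∈ℋ_m} inf_{(θ⁺,d⁺)∈ℋ_m} Φ + rξ`. -/
def Hplus {n : ℕ} (σ : Fin n → ℝ) (μ : EuclideanSpace ℝ (Fin n)) (r : ℝ) (m : ℕ)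
    (ξ : ℝ) (p : EuclideanSpace ℝ (Fin n)) (M : Matrix (Fin n) (Fin n) ℝ) : ℝ :=
  sSup ((fun a => sInf ((fun b => Phi σ μ b.1 a.1 b.2 a.2 p M) '' Hset n m)) '' Hset n m)
    + r * ξ

/-- `H_m⁻(ξ,p,M) = inf_{(θ⁺,d⁺)∈ℋ_m} sup_{(θ⁻,d⁻)∈ℋ_m} Φ + rξ`. -/
def Hminus {n : ℕ} (σ : Fin n → ℝ) (μ : EuclideanSpace ℝ (Fin n)) (r : ℝ) (m : ℕ)
    (ξ : ℝ) (p : EuclideanSpace ℝ (Fin n)) (M : Matrix (Fin n) (Fin n) ℝ) : ℝ :=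
  sInf ((fun b => sSup ((fun a => Phi σ μ b.1 a.1 b.2 a.2 p M) '' Hset n m)) '' Hset n m)
    + r * ξ

/-- The limit operator `F(ξ,p,M)`, for `p ≠ 0`. -/
def Fop {n : ℕ} (σ : Fin n → ℝ) (μ : EuclideanSpace ℝ (Fin n)) (r : ℝ)
    (ξ : ℝ) (p : EuclideanSpace ℝ (Fin n)) (M : Matrix (Fin n) (Fin n) ℝ) : ℝ :=
  (2 / ‖p‖ ^ 2) * sigQF σ M p + (1 / 2) * trSig2 σ M + ⟪μ, p⟫ - r * ξ

/-- `F^*(ξ,0,M) = limsup_{p → 0, p ≠ 0} F(ξ,p,M)`. -/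
def Fupper {n : ℕ} (σ : Fin n → ℝ) (μ : EuclideanSpace ℝ (Fin n)) (r : ℝ)
    (ξ : ℝ) (M : Matrix (Fin n) (Fin n) ℝ) : ℝ :=
  Filter.limsup (fun p => Fop σ μ r ξ p M) (𝓝[≠] (0 : EuclideanSpace ℝ (Fin n)))

/-- `F_*(ξ,0,M) = liminf_{p → 0, p ≠ 0} F(ξ,p,M)`. -/
def Flower {n : ℕ} (σ : Fin n → ℝ) (μ : EuclideanSpace ℝ (Fin n)) (r : ℝ)
    (ξ : ℝ) (M : Matrix (Fin n) (Fin n) ℝ) : ℝ :=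
  Filter.liminf (fun p => Fop σ μ r ξ p M) (𝓝[≠] (0 : EuclideanSpace ℝ (Fin n)))

/-- The parabolic domain `ℝ^n × [0,T]`. -/
def Dom (n : ℕ) (T : ℝ) : Set (EuclideanSpace ℝ (Fin n) × ℝ) :=
  Set.univ ×ˢ Set.Icc 0 T

/-- Test functions: `φ` is `C¹` in time with derivative `φt`, and `C²` in space with spatial
gradient `Dφ` and (symmetric) spatial Hessian `D2φ`, all jointly continuous. -/
def IsC12 {n : ℕ} (φ φt : EuclideanSpace ℝ (Fin n) → ℝ → ℝ)
    (Dφ : EuclideanSpace ℝ (Fin n) → ℝ → EuclideanSpace ℝ (Fin n))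
    (D2φ : EuclideanSpace ℝ (Fin n) → ℝ → Matrix (Fin n) (Fin n) ℝ) : Prop :=
  Continuous (fun q : EuclideanSpace ℝ (Fin n) × ℝ => φt q.1 q.2) ∧
  Continuous (fun q : EuclideanSpace ℝ (Fin n) × ℝ => Dφ q.1 q.2) ∧
  Continuous (fun q : EuclideanSpace ℝ (Fin n) × ℝ => D2φ q.1 q.2) ∧
  (∀ x t, HasDerivAt (fun s => φ x s) (φt x t) t) ∧
  (∀ x t, HasGradientAt (fun y => φ y t) (Dφ x t) x) ∧
  (∀ x t, HasFDerivAt (fun y => Dφ y t) (Matrix.toEuclideanCLM (𝕜 := ℝ) (D2φ x t)) x) ∧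
  (∀ x t, (D2φ x t).IsSymm)

/-- At most linear growth on `ℝ^n × [0,T]`. -/
def LinGrowth {n : ℕ} (T : ℝ) (u : EuclideanSpace ℝ (Fin n) → ℝ → ℝ) : Prop :=
  ∃ c : ℝ, ∀ x t, t ∈ Set.Icc 0 T → |u x t| ≤ c * (1 + ‖x‖)

/-- Continuity on `ℝ^n × [0,T]`. -/
def ContOn {n : ℕ} (T : ℝ) (u : EuclideanSpace ℝ (Fin n) → ℝ → ℝ) : Prop :=
  ContinuousOn (fun q : EuclideanSpace ℝ (Fin n) × ℝ => u q.1 q.2) (Dom n T)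

/-- The payoff `g` is positive, and `sup g + Lip(g) ≤ L`. -/
def PayoffOK {n : ℕ} (g : EuclideanSpace ℝ (Fin n) → ℝ) (L : ℝ) : Prop :=
  (∀ x, 0 < g x) ∧
  ∃ B K : ℝ, B + K ≤ L ∧ (∀ x, g x ≤ B) ∧ ∀ x y, |g x - g y| ≤ K * ‖x - y‖

/-- Viscosity supersolution of `∂ₜ u − H(u,Du,D²u) = 0` with terminal data `g`. -/
def SuperSolH {n : ℕ} (T : ℝ)
    (H : ℝ → EuclideanSpace ℝ (Fin n) → Matrix (Fin n) (Fin n) ℝ → ℝ)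
    (g : EuclideanSpace ℝ (Fin n) → ℝ) (u : EuclideanSpace ℝ (Fin n) → ℝ → ℝ) : Prop :=
  LowerSemicontinuousOn (fun q : EuclideanSpace ℝ (Fin n) × ℝ => u q.1 q.2) (Dom n T) ∧
  LinGrowth T u ∧
  (∀ x, g x ≤ u x T) ∧
  ∀ x₀ t₀, t₀ ∈ Set.Ioo 0 T →
    ∀ φ φt Dφ D2φ, IsC12 φ φt Dφ D2φ →
      u x₀ t₀ = φ x₀ t₀ →
      (∀ x t, t ∈ Set.Icc 0 T → (x, t) ≠ (x₀, t₀) → φ x t < u x t) →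
      φt x₀ t₀ ≤ H (u x₀ t₀) (Dφ x₀ t₀) (D2φ x₀ t₀)

/-- Viscosity subsolution of `∂ₜ u − H(u,Du,D²u) = 0` with terminal data `g`. -/
def SubSolH {n : ℕ} (T : ℝ)
    (H : ℝ → EuclideanSpace ℝ (Fin n) → Matrix (Fin n) (Fin n) ℝ → ℝ)
    (g : EuclideanSpace ℝ (Fin n) → ℝ) (u : EuclideanSpace ℝ (Fin n) → ℝ → ℝ) : Prop :=
  UpperSemicontinuousOn (fun q : EuclideanSpace ℝ (Fin n) × ℝ => u q.1 q.2) (Dom n T) ∧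
  LinGrowth T u ∧
  (∀ x, u x T ≤ g x) ∧
  ∀ x₀ t₀, t₀ ∈ Set.Ioo 0 T →
    ∀ φ φt Dφ D2φ, IsC12 φ φt Dφ D2φ →
      u x₀ t₀ = φ x₀ t₀ →
      (∀ x t, t ∈ Set.Icc 0 T → (x, t) ≠ (x₀, t₀) → u x t < φ x t) →
      H (u x₀ t₀) (Dφ x₀ t₀) (D2φ x₀ t₀) ≤ φt x₀ t₀

/-- Continuous viscosity solution of `∂ₜ u − H(u,Du,D²u) = 0` with terminal data `g`. -/
def SolH {n : ℕ} (T : ℝ)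
    (H : ℝ → EuclideanSpace ℝ (Fin n) → Matrix (Fin n) (Fin n) ℝ → ℝ)
    (g : EuclideanSpace ℝ (Fin n) → ℝ) (u : EuclideanSpace ℝ (Fin n) → ℝ → ℝ) : Prop :=
  ContOn T u ∧ SuperSolH T H g u ∧ SubSolH T H g u

/-- Viscosity supersolution of `∂ₜ u + F(u,Du,D²u) = 0` with terminal data `g`. -/
def SuperSolF {n : ℕ} (T : ℝ) (σ : Fin n → ℝ) (μ : EuclideanSpace ℝ (Fin n)) (r : ℝ)
    (g : EuclideanSpace ℝ (Fin n) → ℝ) (u : EuclideanSpace ℝ (Fin n) → ℝ → ℝ) : Prop :=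
  LowerSemicontinuousOn (fun q : EuclideanSpace ℝ (Fin n) × ℝ => u q.1 q.2) (Dom n T) ∧
  LinGrowth T u ∧
  (∀ x, g x ≤ u x T) ∧
  ∀ x₀ t₀, t₀ ∈ Set.Ioo 0 T →
    ∀ φ φt Dφ D2φ, IsC12 φ φt Dφ D2φ →
      u x₀ t₀ = φ x₀ t₀ →
      (∀ x t, t ∈ Set.Icc 0 T → (x, t) ≠ (x₀, t₀) → φ x t < u x t) →
      (Dφ x₀ t₀ ≠ 0 →
        φt x₀ t₀ + Fop σ μ r (u x₀ t₀) (Dφ x₀ t₀) (D2φ x₀ t₀) ≤ 0) ∧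
      (Dφ x₀ t₀ = 0 →
        φt x₀ t₀ + Flower σ μ r (u x₀ t₀) (D2φ x₀ t₀) ≤ 0)

/-- Viscosity subsolution of `∂ₜ u + F(u,Du,D²u) = 0` with terminal data `g`. -/
def SubSolF {n : ℕ} (T : ℝ) (σ : Fin n → ℝ) (μ : EuclideanSpace ℝ (Fin n)) (r : ℝ)
    (g : EuclideanSpace ℝ (Fin n) → ℝ) (u : EuclideanSpace ℝ (Fin n) → ℝ → ℝ) : Prop :=
  UpperSemicontinuousOn (fun q : EuclideanSpace ℝ (Fin n) × ℝ => u q.1 q.2) (Dom n T) ∧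
  LinGrowth T u ∧
  (∀ x, u x T ≤ g x) ∧
  ∀ x₀ t₀, t₀ ∈ Set.Ioo 0 T →
    ∀ φ φt Dφ D2φ, IsC12 φ φt Dφ D2φ →
      u x₀ t₀ = φ x₀ t₀ →
      (∀ x t, t ∈ Set.Icc 0 T → (x, t) ≠ (x₀, t₀) → u x t < φ x t) →
      (Dφ x₀ t₀ ≠ 0 →
        0 ≤ φt x₀ t₀ + Fop σ μ r (u x₀ t₀) (Dφ x₀ t₀) (D2φ x₀ t₀)) ∧
      (Dφ x₀ t₀ = 0 →
        0 ≤ φt x₀ t₀ + Fupper σ μ r (u x₀ t₀) (D2φ x₀ t₀))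

/-- Continuous viscosity solution of `∂ₜ u + F(u,Du,D²u) = 0` with terminal data `g`. -/
def SolF {n : ℕ} (T : ℝ) (σ : Fin n → ℝ) (μ : EuclideanSpace ℝ (Fin n)) (r : ℝ)
    (g : EuclideanSpace ℝ (Fin n) → ℝ) (u : EuclideanSpace ℝ (Fin n) → ℝ → ℝ) : Prop :=
  ContOn T u ∧ SuperSolF T σ μ r g u ∧ SubSolF T σ μ r g u

/-- The barrier `w̄(x,t) = g(y) + (A/ε²)(T−t) + 2L(|x−y|² + ε)^{1/2}`. -/
def barrierUp {n : ℕ} (g : EuclideanSpace ℝ (Fin n) → ℝ) (L A ε T : ℝ)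
    (y : EuclideanSpace ℝ (Fin n)) : EuclideanSpace ℝ (Fin n) → ℝ → ℝ :=
  fun x t => g y + (A / ε ^ 2) * (T - t) + 2 * L * Real.sqrt (‖x - y‖ ^ 2 + ε)

/-- The barrier `w̲(x,t) = g(y) − (A/ε²)(T−t) − 2L(|x−y|² + ε)^{1/2}`. -/
def barrierDown {n : ℕ} (g : EuclideanSpace ℝ (Fin n) → ℝ) (L A ε T : ℝ)
    (y : EuclideanSpace ℝ (Fin n)) : EuclideanSpace ℝ (Fin n) → ℝ → ℝ :=
  fun x t => g y - (A / ε ^ 2) * (T - t) - 2 * L * Real.sqrt (‖x - y‖ ^ 2 + ε)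

/-- `Φ̃(θ⁺,θ⁻,d⁺,d⁻,p,M)`: the part of `Φ` sensitive to the inf–sup. -/
def PhiT {n : ℕ} (σ : Fin n → ℝ) (θp θm : EuclideanSpace ℝ (Fin n)) (dp dm : ℝ)
    (p : EuclideanSpace ℝ (Fin n)) (M : Matrix (Fin n) (Fin n) ℝ) : ℝ :=
  -(1 / 2) * sigQF σ M (θp - θm) - (dp + dm) * ⟪θp + θm, p⟫

/-- `sup_{(θ⁻,d⁻)∈ℋ_m} Φ̃(θ⁺,θ⁻,d⁺,d⁻,p,M)` as a function of `a = (θ⁺,d⁺)`. -/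
def supPhiT {n : ℕ} (σ : Fin n → ℝ) (m : ℕ) (a : EuclideanSpace ℝ (Fin n) × ℝ)
    (p : EuclideanSpace ℝ (Fin n)) (M : Matrix (Fin n) (Fin n) ℝ) : ℝ :=
  sSup ((fun b => PhiT σ a.1 b.1 a.2 b.2 p M) '' Hset n m)

/-- `Φ̃_m(p,M) = inf_{(θ⁺,d⁺)∈ℋ_m} sup_{(θ⁻,d⁻)∈ℋ_m} Φ̃`. -/
def PhiTm {n : ℕ} (σ : Fin n → ℝ) (m : ℕ)
    (p : EuclideanSpace ℝ (Fin n)) (M : Matrix (Fin n) (Fin n) ℝ) : ℝ :=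
  sInf ((fun a => supPhiT σ m a p M) '' Hset n m)

/-- The set of values appearing in the parabolic sup-convolution. -/
def supConvSet {n : ℕ} (T ε : ℝ) (u : EuclideanSpace ℝ (Fin n) → ℝ → ℝ)
    (x₀ : EuclideanSpace ℝ (Fin n)) (t₀ : ℝ) : Set ℝ :=
  {y | ∃ x t, t ∈ Set.Icc 0 T ∧ y = u x t - ((t₀ - t) ^ 2 + ‖x₀ - x‖ ^ 2) / (2 * ε)}

/-!
The minimizing player plays `θ⁺ = p / |p|` with the largest step `d⁺ = m`. Against any unit
`θ⁻`, with `s = |θ⁺ + θ⁻|`, the drift term costs the maximizer at least `m |p| s² / 2`, while the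
quadratic term exceeds its value `2 (Σp)ᵀ M (Σp) / |p|²` at `θ⁻ = -θ⁺` by at most `O(s)`.
Completing the square gives `H_m⁻ ≤ -F + O(1 / (m |p|))`, with a constant depending continuously
on `M`, so the bound passes to the limit. The answer `θ⁻ = -θ⁺, d⁻ = 0` bounds `H_m⁻` from below,
which is the boundedness the `limsup` needs.
-/

section QuadraticForm

variable {n : ℕ} (σ : Fin n → ℝ) (M : Matrix (Fin n) (Fin n) ℝ)

def sigBilin (v w : EuclideanSpace ℝ (Fin n)) : ℝ :=
  ∑ i, ∑ j, (σ i * v i) * M i j * (σ j * w j)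

def sigBound : ℝ :=
  ∑ i, ∑ j, |σ i| * |σ j| * |M i j|

lemma abs_sigBilin_le (v w : EuclideanSpace ℝ (Fin n)) :
    |sigBilin σ M v w| ≤ sigBound σ M * ‖v‖ * ‖w‖ := by
  have hv : ∀ i, |v i| ≤ ‖v‖ := fun i => by simpa using PiLp.norm_apply_le v i
  have hw : ∀ j, |w j| ≤ ‖w‖ := fun j => by simpa using PiLp.norm_apply_le w j
  calc |sigBilin σ M v w|
      ≤ ∑ i, ∑ j, |(σ i * v i) * M i j * (σ j * w j)| :=
        (Finset.abs_sum_le_sum_abs _ _).trans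
          (Finset.sum_le_sum fun i _ => Finset.abs_sum_le_sum_abs _ _)
    _ ≤ ∑ i, ∑ j, |σ i| * |σ j| * |M i j| * (‖v‖ * ‖w‖) := by
        gcongr with i _ j _
        simp only [abs_mul]
        have := mul_le_mul (hv i) (hw j) (abs_nonneg _) (norm_nonneg _)
        have : 0 ≤ |σ i| * |σ j| * |M i j| := by positivity
        nlinarith
    _ = sigBound σ M * ‖v‖ * ‖w‖ := by
        simp only [sigBound, Finset.sum_mul, mul_assoc]

lemma abs_sigQF_le (v : EuclideanSpace ℝ (Fin n)) :
    |sigQF σ M v| ≤ sigBound σ M * ‖v‖ ^ 2 :=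
  (abs_sigBilin_le σ M v v).trans_eq (by ring)

lemma sigQF_sub_sigQF (x y : EuclideanSpace ℝ (Fin n)) :
    sigQF σ M x - sigQF σ M y = sigBilin σ M (x - y) x + sigBilin σ M y (x - y) := by
  simp only [sigQF, sigBilin, ← Finset.sum_sub_distrib, ← Finset.sum_add_distrib,
    PiLp.sub_apply]
  refine Finset.sum_congr rfl fun i _ => Finset.sum_congr rfl fun j _ => ?_
  ring

lemma abs_sigQF_sub_sigQF_le (x y : EuclideanSpace ℝ (Fin n)) :
    |sigQF σ M x - sigQF σ M y| ≤ sigBound σ M * ‖x - y‖ * (‖x‖ + ‖y‖) := by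
  rw [sigQF_sub_sigQF]
  calc _ ≤ |sigBilin σ M (x - y) x| + |sigBilin σ M y (x - y)| := abs_add_le _ _
    _ ≤ sigBound σ M * ‖x - y‖ * ‖x‖ + sigBound σ M * ‖y‖ * ‖x - y‖ :=
        add_le_add (abs_sigBilin_le σ M _ _) (abs_sigBilin_le σ M _ _)
    _ = _ := by ring

lemma sigQF_smul (c : ℝ) (v : EuclideanSpace ℝ (Fin n)) :
    sigQF σ M (c • v) = c ^ 2 * sigQF σ M v := by
  simp only [sigQF, Finset.mul_sum, PiLp.smul_apply, smul_eq_mul]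
  refine Finset.sum_congr rfl fun i _ => Finset.sum_congr rfl fun j _ => ?_
  ring

lemma continuous_sigBound : Continuous (sigBound σ) := by
  unfold sigBound; fun_prop

lemma continuous_sigQF :
    Continuous fun q : Matrix (Fin n) (Fin n) ℝ × EuclideanSpace ℝ (Fin n) =>
      sigQF σ q.1 q.2 := by
  unfold sigQF; fun_prop

lemma continuous_trSig2 : Continuous (trSig2 σ) := by
  unfold trSig2; fun_prop

end QuadraticForm

section InfSup

variable {α β : Type*} {S : Set α} {T : Set β} {f : α → β → ℝ} {L : ℝ}

lemma mem_lowerBounds_image_csSup_image (hT : ∀ b ∈ S, BddAbove (f b '' T))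
    (hL : ∀ b ∈ S, ∃ a ∈ T, L ≤ f b a) :
    L ∈ lowerBounds ((fun b => sSup (f b '' T)) '' S) := by
  refine Set.forall_mem_image.2 fun b hb => ?_
  obtain ⟨a, ha, hLa⟩ := hL b hb
  exact le_csSup_of_le (hT b hb) (Set.mem_image_of_mem _ ha) hLa

lemma le_csInf_image_csSup_image (hS : S.Nonempty) (hT : ∀ b ∈ S, BddAbove (f b '' T))
    (hL : ∀ b ∈ S, ∃ a ∈ T, L ≤ f b a) :
    L ≤ sInf ((fun b => sSup (f b '' T)) '' S) :=
  le_csInf (hS.image _) (mem_lowerBounds_image_csSup_image hT hL)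

lemma csInf_image_csSup_image_le (hT : ∀ b ∈ S, BddAbove (f b '' T))
    (hL : ∀ b ∈ S, ∃ a ∈ T, L ≤ f b a) {b₀ : α} (hb₀ : b₀ ∈ S) {c : ℝ}
    (hc : ∀ a ∈ T, f b₀ a ≤ c) :
    sInf ((fun b => sSup (f b '' T)) '' S) ≤ c := by
  obtain ⟨a₀, ha₀, -⟩ := hL b₀ hb₀
  exact (csInf_le ⟨L, mem_lowerBounds_image_csSup_image hT hL⟩
    (Set.mem_image_of_mem _ hb₀)).trans
    (csSup_le ⟨_, Set.mem_image_of_mem _ ha₀⟩ (Set.forall_mem_image.2 hc))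

end InfSup

section Hamiltonian

variable {n : ℕ} (σ : Fin n → ℝ) (μ : EuclideanSpace ℝ (Fin n)) (r ξ : ℝ) (m : ℕ)
  {p : EuclideanSpace ℝ (Fin n)} (M : Matrix (Fin n) (Fin n) ℝ)

lemma Hset_eq : Hset n m = Metric.sphere 0 1 ×ˢ Set.Icc 0 (m : ℝ) := by
  ext; simp [Hset]

lemma isCompact_Hset : IsCompact (Hset n m) := by
  rw [Hset_eq]; exact (isCompact_sphere 0 1).prod isCompact_Icc

lemma normalize_mem_Hset (hp : p ≠ 0) {d : ℝ} (hd : d ∈ Set.Icc 0 (m : ℝ)) :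
    (‖p‖⁻¹ • p, d) ∈ Hset n m :=
  ⟨by simp [norm_smul, norm_ne_zero_iff.mpr hp], hd⟩

lemma bddAbove_Phi_image (b : EuclideanSpace ℝ (Fin n) × ℝ) :
    BddAbove ((fun a => Phi σ μ b.1 a.1 b.2 a.2 p M) '' Hset n m) :=
  ((isCompact_Hset m).image (by unfold Phi sigQF; fun_prop)).bddAbove

lemma exists_le_Phi {b : EuclideanSpace ℝ (Fin n) × ℝ} (hb : b ∈ Hset n m) :
    ∃ a ∈ Hset n m,
      -2 * sigBound σ M - 1 / 2 * trSig2 σ M - ⟪μ, p⟫ ≤ Phi σ μ b.1 a.1 b.2 a.2 p M := by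
  refine ⟨(-b.1, 0), ⟨by simpa using hb.1, le_rfl, m.cast_nonneg⟩, ?_⟩
  have hQ := le_of_abs_le (abs_sigQF_le σ M b.1)
  rw [hb.1] at hQ
  have h2 : b.1 - -b.1 = (2 : ℝ) • b.1 := by rw [sub_neg_eq_add, two_smul]
  simp only [Phi, h2, sigQF_smul, add_neg_cancel, inner_zero_left]
  linarith

lemma Phi_normalize_le (hp : p ≠ 0) {D d : ℝ} (hD : 0 < D) (hd : 0 ≤ d)
    {θ : EuclideanSpace ℝ (Fin n)} (hθ : ‖θ‖ = 1) :
    Phi σ μ (‖p‖⁻¹ • p) θ D d p M + r * ξ ≤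
      -Fop σ μ r ξ p M + 2 * sigBound σ M ^ 2 / ‖p‖ / D := by
  set u := ‖p‖⁻¹ • p
  set C := sigBound σ M
  set s := ‖u + θ‖
  have hpn : 0 < ‖p‖ := norm_pos_iff.mpr hp
  have hu : ‖u‖ = 1 := by simp [u, norm_smul, hpn.ne']
  have hpu : p = ‖p‖ • u := by simp [u, smul_smul, hpn.ne']
  have hC : 0 ≤ C := by unfold C sigBound; positivity
  have hinner : ⟪u + θ, p⟫ = ‖p‖ * s ^ 2 / 2 := by
    have hs : s ^ 2 = 2 + 2 * ⟪u, θ⟫ := by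
      simp only [s, norm_add_sq_real, hu, hθ]; ring
    have hp' : ⟪u + θ, p⟫ = ‖p‖ * ⟪u + θ, u⟫ := by
      conv_lhs => rw [hpu]
      exact real_inner_smul_right _ _ _
    rw [hp', hs, inner_add_left, real_inner_self_eq_norm_sq, hu, real_inner_comm]
    ring
  have hquad : -(1 / 2) * sigQF σ M (u - θ) ≤ -2 * sigQF σ M u + 2 * C * s := by
    have h := le_of_abs_le (abs_sigQF_sub_sigQF_le σ M ((2 : ℝ) • u) (u - θ))
    have hdiff : (2 : ℝ) • u - (u - θ) = u + θ := by rw [two_smul]; abel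
    have hle : ‖u - θ‖ ≤ 2 := (norm_sub_le _ _).trans_eq (by rw [hu, hθ]; norm_num)
    rw [hdiff, sigQF_smul, norm_smul, hu] at h
    have : C * s * (‖(2 : ℝ)‖ * 1 + ‖u - θ‖) ≤ C * s * 4 := by
      gcongr; norm_num; linarith
    nlinarith
  -- `2 C s - D ‖p‖ s² / 2` is maximal at `s = 2 C / (D ‖p‖)`
  have hsquare : 2 * C * s - D * (‖p‖ * s ^ 2 / 2) ≤ 2 * C ^ 2 / ‖p‖ / D := by
    rw [div_div, le_div_iff₀ (by positivity)]
    nlinarith [sq_nonneg (D * ‖p‖ * s - 2 * C)]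
  have hdrift : D * (‖p‖ * s ^ 2 / 2) ≤ (D + d) * ⟪u + θ, p⟫ := by
    rw [hinner]; nlinarith [mul_nonneg hd (by positivity : (0 : ℝ) ≤ ‖p‖ * s ^ 2 / 2)]
  have hQu : 2 * sigQF σ M u = 2 / ‖p‖ ^ 2 * sigQF σ M p := by
    simp only [u, sigQF_smul, inv_pow]; ring
  simp only [Phi, Fop]
  linarith

lemma le_Hminus (hS : (Hset n m).Nonempty) :
    -2 * sigBound σ M - 1 / 2 * trSig2 σ M - ⟪μ, p⟫ + r * ξ ≤ Hminus σ μ r m ξ p M :=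
  add_le_add_left (le_csInf_image_csSup_image hS (fun b _ => bddAbove_Phi_image σ μ m M b)
    fun _ hb => exists_le_Phi σ μ m M hb) _

lemma Hminus_le (hp : p ≠ 0) (hm : 0 < m) :
    Hminus σ μ r m ξ p M ≤ -Fop σ μ r ξ p M + 2 * sigBound σ M ^ 2 / ‖p‖ / m := by
  have hinf := csInf_image_csSup_image_le (fun b _ => bddAbove_Phi_image σ μ m M b)
    (fun _ hb => exists_le_Phi σ μ m M hb) (normalize_mem_Hset m hp ⟨m.cast_nonneg, le_rfl⟩)
    (c := -Fop σ μ r ξ p M + 2 * sigBound σ M ^ 2 / ‖p‖ / m - r * ξ) fun a ha =>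
      le_sub_iff_add_le.2 (Phi_normalize_le σ μ r ξ M hp (Nat.cast_pos.2 hm) ha.2.1 ha.1)
  unfold Hminus
  linarith

lemma tendsto_Fop {ι : Type*} {l : Filter ι} {ξs : ι → ℝ}
    {ps : ι → EuclideanSpace ℝ (Fin n)} {Ms : ι → Matrix (Fin n) (Fin n) ℝ} (hp : p ≠ 0)
    (hξ : Tendsto ξs l (𝓝 ξ)) (hpt : Tendsto ps l (𝓝 p)) (hMt : Tendsto Ms l (𝓝 M)) :
    Tendsto (fun i => Fop σ μ r (ξs i) (ps i) (Ms i)) l (𝓝 (Fop σ μ r ξ p M)) := by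
  have hQ := ((continuous_sigQF σ).tendsto (M, p)).comp (hMt.prodMk_nhds hpt)
  have htr := ((continuous_trSig2 σ).tendsto M).comp hMt
  have hnorm : ‖p‖ ^ 2 ≠ 0 := by positivity
  exact ((((tendsto_const_nhds.div (hpt.norm.pow 2) hnorm).mul hQ).add
    (htr.const_mul _)).add (tendsto_const_nhds.inner hpt)).sub (hξ.const_mul r)

lemma isBoundedUnder_ge_Hminus {ξs : ℕ → ℝ} {ps : ℕ → EuclideanSpace ℝ (Fin n)}
    {Ms : ℕ → Matrix (Fin n) (Fin n) ℝ} (hp : p ≠ 0) (hξ : Tendsto ξs atTop (𝓝 ξ))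
    (hpt : Tendsto ps atTop (𝓝 p)) (hMt : Tendsto Ms atTop (𝓝 M)) :
    IsBoundedUnder (· ≥ ·) atTop fun m => Hminus σ μ r m (ξs m) (ps m) (Ms m) := by
  have hC := ((continuous_sigBound σ).tendsto M).comp hMt
  have htr := ((continuous_trSig2 σ).tendsto M).comp hMt
  have hlower := (((hC.const_mul (-2)).sub (htr.const_mul (1 / 2))).sub
    (tendsto_const_nhds.inner hpt (x := μ))).add (hξ.const_mul r)
  refine hlower.isBoundedUnder_ge.mono_ge (Eventually.of_forall fun m => ?_)
  exact le_Hminus σ μ r (ξs m) m (Ms m)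
    ⟨_, normalize_mem_Hset m hp ⟨le_rfl, m.cast_nonneg⟩⟩

end Hamiltonian

theorem limsup_upper_bound_general (n : ℕ)
    (σ : Fin n → ℝ) (μ : EuclideanSpace ℝ (Fin n))
    (r : ℝ)
    (ξs : ℕ → ℝ) (ps : ℕ → EuclideanSpace ℝ (Fin n)) (Ms : ℕ → Matrix (Fin n) (Fin n) ℝ)
    (ξ : ℝ) (p : EuclideanSpace ℝ (Fin n)) (M : Matrix (Fin n) (Fin n) ℝ)
    (hp : p ≠ 0)
    (hξ : Tendsto ξs atTop (𝓝 ξ)) (hpt : Tendsto ps atTop (𝓝 p))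
    (hMt : Tendsto Ms atTop (𝓝 M)) :
    Filter.limsup (fun m => Hminus σ μ r m (ξs m) (ps m) (Ms m)) atTop ≤
      -Fop σ μ r ξ p M := by
  set err : ℕ → ℝ := fun m => 2 * sigBound σ (Ms m) ^ 2 / ‖ps m‖ / m
  have herr : Tendsto err atTop (𝓝 0) :=
    ((((((continuous_sigBound σ).tendsto M).comp hMt).pow 2).const_mul 2).div hpt.norm
      (norm_ne_zero_iff.2 hp)).div_atTop tendsto_natCast_atTop_atTop
  have hbound := (tendsto_Fop σ μ r ξ M hp hξ hpt hMt).neg.add herr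
  have hupper : ∀ᶠ m : ℕ in atTop,
      Hminus σ μ r m (ξs m) (ps m) (Ms m) ≤ -Fop σ μ r (ξs m) (ps m) (Ms m) + err m := by
    filter_upwards [hpt.eventually_ne hp, eventually_gt_atTop 0] with m hpm hm
    exact Hminus_le σ μ r (ξs m) m (Ms m) hpm hm
  calc _ ≤ limsup (fun m => -Fop σ μ r (ξs m) (ps m) (Ms m) + err m) atTop :=
        limsup_le_limsup hupper
          (isBoundedUnder_ge_Hminus σ μ r ξ M hp hξ hpt hMt).isCoboundedUnder_le
          hbound.isBoundedUnder_le
    _ = -Fop σ μ r ξ p M := by simpa using hbound.limsup_eq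

/-- claim (5.6) in the proof of Lemma 5.1: upper bound in the limit,
`limsup_m H_m⁻(ξ_m, p_m, M_m) ≤ −F(ξ, p, M)`. -/
theorem limsup_upper_bound (n : ℕ) (hn : 1 ≤ n)
    (σ : Fin n → ℝ) (hσ : ∀ i, 0 < σ i) (μ : EuclideanSpace ℝ (Fin n))
    (r : ℝ) (hr : 0 ≤ r)
    (ξs : ℕ → ℝ) (ps : ℕ → EuclideanSpace ℝ (Fin n)) (Ms : ℕ → Matrix (Fin n) (Fin n) ℝ)
    (ξ : ℝ) (p : EuclideanSpace ℝ (Fin n)) (M : Matrix (Fin n) (Fin n) ℝ)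
    (hMs : ∀ m, (Ms m).IsSymm) (hM : M.IsSymm)
    (hps : ∀ m, ps m ≠ 0) (hp : p ≠ 0)
    (hξ : Tendsto ξs atTop (𝓝 ξ)) (hpt : Tendsto ps atTop (𝓝 p))
    (hMt : Tendsto Ms atTop (𝓝 M)) :
    Filter.limsup (fun m => Hminus σ μ r m (ξs m) (ps m) (Ms m)) atTop ≤
      -Fop σ μ r ξ p M :=
  limsup_upper_bound_general n σ μ r ξs ps Ms ξ p M hp hξ hpt hMt

end TugOfWar
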